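/- Let Σ_i ⟨[r] p_i, q_i⟩ = 0 for all r ∈ ℝ^s (first-order stationarity). Then for all r ∈ ℝ^s, Σ_i ⟨(I − exp([r])) p_i, q_i⟩ ≤ ψ₂(‖r‖) · σ_P · σ_Q, where σ_P = (Σ ‖p_i‖²)^{1/2}, σ_Q = (Σ ‖q_i‖²)^{1/2}, ψ₂(x) = e^x − 1 − x. -/

import Mathlib

open scoped BigOperators RealInnerProductSpace
open Matrix

noncomputable def mulVecE {d : ℕ} (A : Matrix (Fin d) (Fin d) ℝ)
    (p : EuclideanSpace ℝ (Fin d)) : EuclideanSpace ℝ (Fin d) :=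
  Matrix.toEuclideanLin A p

def bracket {d s : ℕ} (e : {p : Fin d × Fin d // p.2 < p.1} ≃ Fin s)
    (r : EuclideanSpace ℝ (Fin s)) : Matrix (Fin d) (Fin d) ℝ :=
  fun i j =>
    if h : j < i then r (e ⟨(i, j), h⟩)
    else if h' : i < j then -r (e ⟨(j, i), h'⟩) else 0

noncomputable def psi (k : ℕ) (x : ℝ) : ℝ :=
  Real.exp x - ∑ j ∈ Finset.range k, x ^ j / (Nat.factorial j : ℝ)

open Finset
open scoped Nat

/-!
Write `T` for the operator of `[r]`. Since `1 - exp T = (1 + T - exp T) - T` and the `T`-part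
vanishes by stationarity, Cauchy–Schwarz bounds the sum by `‖exp T - 1 - T‖ σ_P σ_Q`, and the
exponential series gives `‖exp T - 1 - T‖ ≤ ψ₂(‖T‖)`. It remains to see `‖T‖ ≤ ‖r‖`, although
the Hilbert–Schmidt norm of `T` is `√2 ‖r‖`: for a skew operator the unit vector `w = Tx/‖Tx‖` is
orthogonal to `x` and `‖Tw‖ ≥ ‖Tx‖`, so Bessel's inequality for the pair `x, w` gives
`2 ‖Tx‖² ≤ ‖T‖²_HS`.
-/

theorem hasSum_psi (k : ℕ) (c : ℝ) :
    HasSum (fun n ↦ c ^ (n + k) / (n + k)!) (psi k c) :=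
  (hasSum_nat_add_iff' k).mpr <| by
    simpa [Real.exp_eq_exp_ℝ] using NormedSpace.expSeries_div_hasSum_exp c

theorem norm_exp_sub_sum_range_le_psi {𝔸 : Type*} [NormedRing 𝔸] [NormedAlgebra ℝ 𝔸]
    [CompleteSpace 𝔸] {k : ℕ} (hk : 0 < k) {x : 𝔸} {c : ℝ} (hx : ‖x‖ ≤ c) :
    ‖NormedSpace.exp x - ∑ j ∈ range k, (j !⁻¹ : ℝ) • x ^ j‖ ≤ psi k c := by
  refine ((hasSum_nat_add_iff' k).mpr (NormedSpace.exp_series_hasSum_exp' (𝕂 := ℝ) x))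
    |>.norm_le_of_bounded (hasSum_psi k c) fun n ↦ ?_
  rw [norm_smul, Real.norm_of_nonneg (by positivity), inv_mul_eq_div]
  gcongr
  exact (norm_pow_le' x (by omega)).trans (pow_le_pow_left₀ (norm_nonneg x) hx _)

theorem sum_inner_apply_le {E F ι : Type*} [NormedAddCommGroup E] [InnerProductSpace ℝ E]
    [NormedAddCommGroup F] [InnerProductSpace ℝ F] (U : E →L[ℝ] F) (s : Finset ι)
    (p : ι → E) (q : ι → F) :
    ∑ i ∈ s, ⟪U (p i), q i⟫ ≤ ‖U‖ * √(∑ i ∈ s, ‖p i‖ ^ 2) * √(∑ i ∈ s, ‖q i‖ ^ 2) :=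
  calc ∑ i ∈ s, ⟪U (p i), q i⟫ ≤ ∑ i ∈ s, ‖U‖ * ‖p i‖ * ‖q i‖ :=
        sum_le_sum fun i _ ↦ (real_inner_le_norm _ _).trans <|
          mul_le_mul_of_nonneg_right (U.le_opNorm _) (norm_nonneg _)
    _ = ‖U‖ * ∑ i ∈ s, ‖p i‖ * ‖q i‖ := by simp_rw [mul_assoc, mul_sum]
    _ ≤ ‖U‖ * √(∑ i ∈ s, ‖p i‖ ^ 2) * √(∑ i ∈ s, ‖q i‖ ^ 2) := by
        rw [mul_assoc]; gcongr; exact Real.sum_mul_le_sqrt_mul_sqrt s _ _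

section Skew

variable {E ι : Type*} [NormedAddCommGroup E] [InnerProductSpace ℝ E] [Fintype ι]
  {T : E →L[ℝ] E} (b : OrthonormalBasis ι ℝ E)

theorem sum_norm_apply_sq_le_of_skew (hT : ∀ x y, ⟪T x, y⟫ = -⟪x, T y⟫) {κ : Type*}
    {v : κ → E} (hv : Orthonormal ℝ v) (s : Finset κ) :
    ∑ k ∈ s, ‖T (v k)‖ ^ 2 ≤ ∑ j, ‖T (b j)‖ ^ 2 := by
  have parseval (u : E) : ‖T u‖ ^ 2 = ∑ j, ‖⟪u, T (b j)⟫‖ ^ 2 := by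
    rw [← b.sum_sq_norm_inner_right (T u)]
    refine sum_congr rfl fun j _ ↦ ?_
    rw [← norm_neg, ← hT, real_inner_comm]
  calc ∑ k ∈ s, ‖T (v k)‖ ^ 2 = ∑ j, ∑ k ∈ s, ‖⟪v k, T (b j)⟫‖ ^ 2 := by
        simp_rw [parseval]; exact sum_comm
    _ ≤ ∑ j, ‖T (b j)‖ ^ 2 := sum_le_sum fun j _ ↦ hv.sum_inner_products_le (T (b j))

theorem two_mul_norm_apply_sq_le_of_skew (hT : ∀ x y, ⟪T x, y⟫ = -⟪x, T y⟫)
    {x : E} (hx : ‖x‖ = 1) : 2 * ‖T x‖ ^ 2 ≤ ∑ j, ‖T (b j)‖ ^ 2 := by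
  by_cases hTx : T x = 0
  · simpa [hTx] using sum_nonneg fun j _ ↦ sq_nonneg ‖T (b j)‖
  set w := (‖T x‖⁻¹ : ℝ) • T x with hw
  have hxTx : ⟪x, T x⟫ = 0 := by linarith [hT x x, real_inner_comm x (T x)]
  have hv : Orthonormal ℝ ![x, w] := by
    have hw1 : ‖w‖ = 1 := norm_smul_inv_norm (𝕜 := ℝ) hTx
    have hxw : ⟪x, w⟫ = 0 := by rw [hw, inner_smul_right, hxTx, mul_zero]
    simp [hx, hw1, hxw]
  have hTw : ‖T x‖ ≤ ‖T w‖ := by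
    have h : ⟪T w, x⟫ = -‖T x‖ := by
      rw [hT, real_inner_comm, hw, inner_smul_right, real_inner_self_eq_norm_sq]
      field_simp [norm_ne_zero_iff.mpr hTx]
    simpa [h, hx] using abs_real_inner_le_norm (T w) x
  have := sum_norm_apply_sq_le_of_skew b hT hv univ
  simp only [Fin.sum_univ_two, cons_val_zero, cons_val_one] at this
  nlinarith [norm_nonneg (T x)]

theorem two_mul_opNorm_sq_le_of_skew (hT : ∀ x y, ⟪T x, y⟫ = -⟪x, T y⟫) :
    2 * ‖T‖ ^ 2 ≤ ∑ j, ‖T (b j)‖ ^ 2 := by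
  have h : ‖T‖ ≤ √((∑ j, ‖T (b j)‖ ^ 2) / 2) :=
    T.opNorm_le_of_unit_norm (Real.sqrt_nonneg _) fun x hx ↦
      Real.le_sqrt_of_sq_le (by linarith [two_mul_norm_apply_sq_le_of_skew b hT hx])
  have := pow_le_pow_left₀ (norm_nonneg T) h 2
  rw [Real.sq_sqrt (by positivity)] at this
  linarith

end Skew

theorem inner_toEuclideanCLM_of_transpose_eq_neg {n : Type*} [Fintype n] [DecidableEq n]
    {A : Matrix n n ℝ} (hA : Aᵀ = -A) (x y : EuclideanSpace ℝ n) :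
    ⟪toEuclideanCLM (𝕜 := ℝ) A x, y⟫ = -⟪x, toEuclideanCLM (𝕜 := ℝ) A y⟫ := by
  rw [real_inner_comm, inner_toEuclideanCLM, inner_toEuclideanCLM, dotProduct_mulVec,
    ← mulVec_transpose, hA, neg_mulVec, neg_dotProduct, dotProduct_comm]

theorem sum_norm_toEuclideanCLM_basisFun_sq {n : Type*} [Fintype n] [DecidableEq n]
    (A : Matrix n n ℝ) :
    ∑ j, ‖toEuclideanCLM (𝕜 := ℝ) A (EuclideanSpace.basisFun n ℝ j)‖ ^ 2 =
      ∑ i, ∑ j, A i j ^ 2 := by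
  rw [sum_comm]
  simp [EuclideanSpace.real_norm_sq_eq]

open scoped Matrix.Norms.Operator in
theorem toEuclideanCLM_exp {n : Type*} [Fintype n] [DecidableEq n] (A : Matrix n n ℝ) :
    toEuclideanCLM (𝕜 := ℝ) (NormedSpace.exp A) = NormedSpace.exp (toEuclideanCLM (𝕜 := ℝ) A) :=
  NormedSpace.map_exp toEuclideanCLM
    (toEuclideanCLM (n := n) (𝕜 := ℝ)).toAlgEquiv.toLinearMap.continuous_of_finiteDimensional A

theorem mulVecE_eq_toEuclideanCLM {d : ℕ} (A : Matrix (Fin d) (Fin d) ℝ)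
    (x : EuclideanSpace ℝ (Fin d)) : mulVecE A x = toEuclideanCLM (𝕜 := ℝ) A x :=
  rfl

section Bracket

variable {d s : ℕ} (e : {p : Fin d × Fin d // p.2 < p.1} ≃ Fin s) (r : EuclideanSpace ℝ (Fin s))

theorem bracket_transpose : (bracket e r)ᵀ = -bracket e r := by
  ext i j
  rcases lt_trichotomy i j with h | rfl | h
  · simp [bracket, h, h.not_gt]
  · simp [bracket]
  · simp [bracket, h, h.not_gt]

theorem sum_sum_bracket_sq : ∑ i, ∑ j, bracket e r i j ^ 2 = 2 * ‖r‖ ^ 2 := by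
  let f : Fin d × Fin d → ℝ := fun ij ↦ if h : ij.2 < ij.1 then r (e ⟨ij, h⟩) ^ 2 else 0
  have hsplit (i j : Fin d) : bracket e r i j ^ 2 = f (i, j) + f (j, i) := by
    rcases lt_trichotomy i j with h | rfl | h
    · simp [f, bracket, h, h.not_gt]
    · simp [f, bracket]
    · simp [f, bracket, h, h.not_gt]
  have hf : ∑ ij, f ij = ‖r‖ ^ 2 := by
    have hlower : ∑ ij : {ij : Fin d × Fin d // ij.2 < ij.1}, f ij = ∑ ij, r (e ij) ^ 2 :=
      sum_congr rfl fun ij _ ↦ dif_pos ij.2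
    have hupper : ∑ ij : {ij : Fin d × Fin d // ¬ij.2 < ij.1}, f ij = 0 :=
      sum_eq_zero fun ij _ ↦ dif_neg ij.2
    rw [← Fintype.sum_subtype_add_sum_subtype (fun ij : Fin d × Fin d ↦ ij.2 < ij.1) f,
      hlower, hupper, add_zero, e.sum_comp (fun k ↦ r k ^ 2), EuclideanSpace.real_norm_sq_eq]
  simp_rw [hsplit, ← Fintype.sum_prod_type', sum_add_distrib]
  rw [Fintype.sum_equiv (Equiv.prodComm _ _) (fun ij ↦ f (ij.2, ij.1)) f (fun _ ↦ rfl), hf]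
  ring

theorem norm_toEuclideanCLM_bracket_le : ‖toEuclideanCLM (𝕜 := ℝ) (bracket e r)‖ ≤ ‖r‖ := by
  have h := two_mul_opNorm_sq_le_of_skew (EuclideanSpace.basisFun (Fin d) ℝ)
    (inner_toEuclideanCLM_of_transpose_eq_neg (bracket_transpose e r))
  rw [sum_norm_toEuclideanCLM_basisFun_sq, sum_sum_bracket_sq] at h
  exact (pow_le_pow_iff_left₀ (norm_nonneg _) (norm_nonneg r) two_ne_zero).mp (by linarith)

end Bracket

/-- Under first-order stationarity `Σ_i ⟨[r] p_i, q_i⟩ = 0` for all `r`, one has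
`Σ_i ⟨(I − exp([r])) p_i, q_i⟩ ≤ ψ₂(‖r‖) σ_P σ_Q`. -/
theorem stationary_second_order_bound
    {d s n : ℕ}
    (e : {p : Fin d × Fin d // p.2 < p.1} ≃ Fin s)
    (p q : Fin n → EuclideanSpace ℝ (Fin d))
    (hstat : ∀ r : EuclideanSpace ℝ (Fin s), ∑ i, ⟪mulVecE (bracket e r) (p i), q i⟫ = 0) :
    ∀ r : EuclideanSpace ℝ (Fin s),
      ∑ i, ⟪mulVecE (1 - NormedSpace.exp (bracket e r)) (p i), q i⟫ ≤
        psi 2 ‖r‖ * Real.sqrt (∑ i, ‖p i‖ ^ 2) * Real.sqrt (∑ i, ‖q i‖ ^ 2) := by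
  intro r
  set T := toEuclideanCLM (𝕜 := ℝ) (bracket e r) with hT_def
  have hsplit : toEuclideanCLM (𝕜 := ℝ) (1 - NormedSpace.exp (bracket e r)) =
      (1 + T - NormedSpace.exp T) - T := by
    rw [map_sub, map_one, toEuclideanCLM_exp, ← hT_def]
    abel
  have hrem : ‖1 + T - NormedSpace.exp T‖ ≤ psi 2 ‖r‖ := by
    have hTr : ‖T‖ ≤ ‖r‖ := norm_toEuclideanCLM_bracket_le e r
    rw [← norm_neg, neg_sub]
    simpa [sum_range_succ, add_comm] using
      norm_exp_sub_sum_range_le_psi (k := 2) (by norm_num) hTr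
  have hstatT : ∑ i, ⟪T (p i), q i⟫ = 0 := hstat r
  calc ∑ i, ⟪mulVecE (1 - NormedSpace.exp (bracket e r)) (p i), q i⟫
      = ∑ i, ⟪(1 + T - NormedSpace.exp T) (p i), q i⟫ - ∑ i, ⟪T (p i), q i⟫ := by
        simp only [mulVecE_eq_toEuclideanCLM, hsplit, _root_.sub_apply, inner_sub_left,
          sum_sub_distrib]
    _ ≤ psi 2 ‖r‖ * √(∑ i, ‖p i‖ ^ 2) * √(∑ i, ‖q i‖ ^ 2) := by
        rw [hstatT, sub_zero]
        exact (sum_inner_apply_le _ _ _ _).trans (by gcongr)
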